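/- Depth-first search with a visited set along the current path finds exactly the simple (loop-free) paths to goal states: in a finite directed graph with initial node s and goal predicate G, the set of paths returned by the recursive procedure (which skips nodes on the current recursion path and returns a path as soon as its endpoint satisfies G, without extending it) equals the set of paths from s that end at a G-node, contain no repeated node, and have no proper prefix ending at a G-node. -/

import Mathlib

/-!
DFS with the current path as visited set, started from `v` with path prefix `path`, returns
exactly the lists `path ++ q` where `q` is a simple minimal goal path from `v` avoiding the
visited nodes. This follows by well-founded recursion on the number of unvisited nodes, since a
simple minimal goal path `v :: b :: t` from a non-goal node `v` is the step `v → b` followed by a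
simple minimal goal path from `b` that avoids `v`.
-/

variable {V : Type} [Fintype V] [DecidableEq V]

/-- Depth-first search collecting paths: skips nodes on the current recursion
path (the visited set), returns the current path as soon as its endpoint
satisfies the goal (without extending it), and otherwise recurses on the
successors. -/
def dfs [Fintype V] (E : V → Finset V) (G : V → Bool)
    (visited : Finset V) (path : List V) (v : V) : Finset (List V) :=
  if hv : v ∈ visited then ∅
  else if G v then {path ++ [v]}
  else (E v).biUnion (fun w => dfs E G (insert v visited) (path ++ [v]) w)
termination_by (Finset.univ \ visited).card
decreasing_by
  apply Finset.card_lt_card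
  constructor
  · exact Finset.sdiff_subset_sdiff (Finset.Subset.refl _) (Finset.subset_insert _ _)
  · intro hsub
    have := hsub (Finset.mem_sdiff.mpr ⟨Finset.mem_univ v, hv⟩)
    simp at this

/-- A simple minimal goal path from s: starts at s, follows edges, has no
repeated node, ends at a goal node, and no proper prefix ends at a goal
node. -/
def IsSimpleMinimalGoalPath (E : V → Finset V) (G : V → Bool) (s : V)
    (p : List V) : Prop :=
  p.head? = some s ∧
  p.Chain' (fun a b => b ∈ E a) ∧
  p.Nodup ∧
  (∃ last, p.getLast? = some last ∧ G last = true) ∧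
  (∀ v ∈ p.dropLast, G v = false)

open Finset in
lemma card_univ_sdiff_insert_lt {s : Finset V} {v : V} (hv : v ∉ s) :
    #(univ \ insert v s) < #(univ \ s) := by
  simp only [← compl_eq_univ_sdiff, card_compl, card_insert_of_notMem hv]
  have := card_le_univ (insert v s)
  rw [card_insert_of_notMem hv] at this
  omega

namespace IsSimpleMinimalGoalPath

lemma exists_eq_cons {V : Type} {E : V → Finset V} {G : V → Bool} {s : V} {p : List V}
    (hp : IsSimpleMinimalGoalPath E G s p) : ∃ t, p = s :: t := by
  obtain ⟨hhead, -⟩ := hp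
  cases p with
  | nil => simp at hhead
  | cons x t => exact ⟨t, by simpa using hhead⟩

lemma singleton_iff {V : Type} {E : V → Finset V} {G : V → Bool} {s : V} :
    IsSimpleMinimalGoalPath E G s [s] ↔ G s = true := by
  simp [IsSimpleMinimalGoalPath, List.Chain']

lemma cons_cons_iff {V : Type} {E : V → Finset V} {G : V → Bool} {s b : V} {t : List V} :
    IsSimpleMinimalGoalPath E G s (s :: b :: t) ↔
      G s = false ∧ b ∈ E s ∧ s ∉ b :: t ∧ IsSimpleMinimalGoalPath E G b (b :: t) := by
  simp only [IsSimpleMinimalGoalPath, List.Chain', List.head?_cons, List.isChain_cons_cons,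
    List.nodup_cons (a := s), List.getLast?_cons_cons, List.dropLast_cons_cons,
    List.forall_mem_cons]
  tauto

end IsSimpleMinimalGoalPath

open IsSimpleMinimalGoalPath in
lemma mem_dfs_iff (E : V → Finset V) (G : V → Bool) (visited : Finset V) (path : List V)
    (v : V) (p : List V) :
    p ∈ dfs E G visited path v ↔
      ∃ q, p = path ++ q ∧ IsSimpleMinimalGoalPath E G v q ∧ ∀ x ∈ q, x ∉ visited := by
  rw [dfs]
  split_ifs with hv hg
  · simp only [Finset.notMem_empty, false_iff, not_exists, not_and]
    rintro q - hq havoid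
    obtain ⟨t, rfl⟩ := hq.exists_eq_cons
    exact havoid v List.mem_cons_self hv
  · simp only [Finset.mem_singleton]
    constructor
    · rintro rfl
      exact ⟨[v], rfl, singleton_iff.2 hg, by simpa using hv⟩
    · rintro ⟨q, rfl, hq, -⟩
      obtain ⟨t, rfl⟩ := hq.exists_eq_cons
      cases t with
      | nil => rfl
      | cons b t => simp [cons_cons_iff.1 hq |>.1] at hg
  · have hg : G v = false := by simpa using hg
    simp only [Finset.mem_biUnion, mem_dfs_iff E G (insert v visited)]
    constructor
    · rintro ⟨b, hb, q, rfl, hq, havoid⟩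
      obtain ⟨t, rfl⟩ := hq.exists_eq_cons
      have havoid' : ∀ x ∈ b :: t, x ∉ visited ∧ x ≠ v := by simpa [and_comm] using havoid
      refine ⟨v :: b :: t, by simp, cons_cons_iff.2 ⟨hg, hb, ?_, hq⟩, ?_⟩
      · exact fun hvq => (havoid' v hvq).2 rfl
      · simpa [hv] using fun x hx => (havoid' x hx).1
    · rintro ⟨q, rfl, hq, havoid⟩
      obtain ⟨t, rfl⟩ := hq.exists_eq_cons
      cases t with
      | nil => simp [singleton_iff.1 hq] at hg
      | cons b t =>
        obtain ⟨-, hb, hvt, hbt⟩ := cons_cons_iff.1 hq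
        refine ⟨b, hb, b :: t, by simp, hbt, fun x hx => ?_⟩
        simp only [Finset.mem_insert, not_or]
        exact ⟨fun hxv => hvt (hxv ▸ hx), havoid x (List.mem_cons_of_mem v hx)⟩
termination_by (Finset.univ \ visited).card
decreasing_by exact card_univ_sdiff_insert_lt hv

/-- DFS with a visited set along the current path returns exactly the simple
minimal goal paths from the initial node. -/
theorem dfs_finds_exactly_simple_minimal_goal_paths
    (E : V → Finset V) (G : V → Bool) (s : V) (p : List V) :
    p ∈ dfs E G ∅ [] s ↔ IsSimpleMinimalGoalPath E G s p := by
  simp [mem_dfs_iff]
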